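/- Let H : ℝ → ℝ be a bounded C⁴ function with H(0) = 0, H even, and C_4 := max_{0≤p≤4} sup_η |H^{(p)}(η)| < ∞. Then for every a ≥ 0, D_1(H, a) ≥ D_1(H, 0)² / ( (3/2) C_4 a² + 4 D_1(H, 0) ). -/

import Mathlib

open MeasureTheory Real Filter

noncomputable section

/-- `D_N(H,a) = sup_{η ≠ 0} |Σⱼ H(ηⱼ) Γ_{N-1}(η^j)| / (a² + |η|²)`, where
`Γ_{N-1}(η^j) = ∏_{i≠j} e^{-π ηᵢ²}`. -/
def DN (N : ℕ) (H : ℝ → ℝ) (a : ℝ) : ℝ :=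
  ⨆ η : {η : Fin N → ℝ // η ≠ 0},
    |∑ j, H (η.1 j) * ∏ i ∈ Finset.univ.erase j, Real.exp (-Real.pi * (η.1 i) ^ 2)| /
      (a ^ 2 + ∑ i, (η.1 i) ^ 2)

/-- `C₄ = max_{p ≤ 4} sup_η |H⁽ᵖ⁾(η)|`. -/
def derivBound4 (H : ℝ → ℝ) : ℝ :=
  ⨆ p : Fin 5, ⨆ η : ℝ, |iteratedDeriv (p : ℕ) H η|

/-!
Taylor expansion at the origin, where `H` and its odd derivatives vanish, gives
`|H x| ≤ C₄ x² / 2` and `|H x - H''(0) x² / 2| ≤ C₄ x⁴ / 24`. Fix `t > 0` and `x ≠ 0`. If `x² ≥ t`,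
the point `x` itself shows `D₁(H,a) ≥ (|H x| / x²) t / (a² + t)`. If `x² < t`, the quartic bound
forces `|H''(0)| / 2` to be nearly as large as `|H x| / x²`, so `H` is large at `√t`. Either way
`D₁(H,a) ≥ (|H x| / x² - C₄ t / 12) t / (a² + t)`; take the supremum over `x` and
`t = 6 D₁(H,0) / C₄`.
-/
open Finset Nat

lemma Function.Even.iteratedDeriv_eq_zero_of_odd {F : Type*} [NormedAddCommGroup F]
    [NormedSpace ℝ F] {f : ℝ → F} (hf : f.Even) {n : ℕ} (hn : Odd n) :
    iteratedDeriv n f 0 = 0 := by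
  have h := iteratedDeriv_comp_neg n f 0
  rw [funext hf, neg_zero, hn.neg_one_pow, neg_one_smul, ← sub_eq_zero, sub_neg_eq_add,
    ← two_smul ℝ] at h
  exact (smul_eq_zero.mp h).resolve_left two_ne_zero

lemma abs_sub_taylor_le {f : ℝ → ℝ} {n : ℕ} (hf : ContDiff ℝ (n + 1) f) {C : ℝ}
    (hC : ∀ y, |iteratedDeriv (n + 1) f y| ≤ C) (x₀ x : ℝ) :
    |f x - ∑ k ∈ range (n + 1), iteratedDeriv k f x₀ / (k ! : ℝ) * (x - x₀) ^ k|
      ≤ C * |x - x₀| ^ (n + 1) / ((n + 1)! : ℝ) := by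
  rcases eq_or_ne x₀ x with rfl | hx
  · simp [Finset.sum_range_succ']
  obtain ⟨x', -, hx'⟩ := taylor_mean_remainder_lagrange_iteratedDeriv hx hf.contDiffOn
  have htaylor : taylorWithinEval f n (Set.uIcc x₀ x) x₀ x
      = ∑ k ∈ range (n + 1), iteratedDeriv k f x₀ / (k ! : ℝ) * (x - x₀) ^ k := by
    rw [taylor_within_apply]
    refine Finset.sum_congr rfl fun k hk => ?_
    rw [iteratedDerivWithin_eq_iteratedDeriv (uniqueDiffOn_uIcc hx) _ Set.left_mem_uIcc,
      smul_eq_mul]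
    · ring
    · exact hf.contDiffAt.of_le (by exact_mod_cast (mem_range.mp hk).le)
  rw [← htaylor, hx', abs_div, abs_mul, abs_pow, Nat.abs_cast]
  gcongr
  exact hC x'

lemma DN_one_eq (H : ℝ → ℝ) (b : ℝ) :
    DN 1 H b = ⨆ x : {x : ℝ // x ≠ 0}, |H x| / (b ^ 2 + x.1 ^ 2) := by
  let e : {η : Fin 1 → ℝ // η ≠ 0} ≃ {x : ℝ // x ≠ 0} :=
    (Equiv.funUnique (Fin 1) ℝ).subtypeEquiv fun η => by simp [funext_iff]
  rw [DN, ← e.surjective.iSup_comp]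
  simp [e]

section DN_one

variable {H : ℝ → ℝ} {b : ℝ}

lemma DN_one_nonneg : 0 ≤ DN 1 H b := by
  rw [DN_one_eq]
  exact Real.iSup_nonneg fun x => by positivity

lemma div_le_of_abs_le_sq {K : ℝ} (hK : ∀ x, |H x| ≤ K * x ^ 2) {x : ℝ} (hx : x ≠ 0) :
    |H x| / (b ^ 2 + x ^ 2) ≤ K := by
  have hK0 : 0 ≤ K := by simpa using (abs_nonneg _).trans (hK 1)
  rw [div_le_iff₀ (by positivity)]
  nlinarith [hK x, sq_nonneg b]

lemma bddAbove_of_abs_le_sq {K : ℝ} (hK : ∀ x, |H x| ≤ K * x ^ 2) :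
    BddAbove (Set.range fun x : {x : ℝ // x ≠ 0} => |H x| / (b ^ 2 + x.1 ^ 2)) :=
  ⟨K, by rintro _ ⟨x, rfl⟩; exact div_le_of_abs_le_sq hK x.2⟩

lemma DN_one_le_of_abs_le_sq {K : ℝ} (hK : ∀ x, |H x| ≤ K * x ^ 2) : DN 1 H b ≤ K := by
  rw [DN_one_eq]
  have : Nonempty {x : ℝ // x ≠ 0} := ⟨⟨1, one_ne_zero⟩⟩
  exact ciSup_le fun x => div_le_of_abs_le_sq hK x.2

end DN_one

lemma mul_le_of_abs_sub_quadratic_le {H : ℝ → ℝ} {d C a t S : ℝ}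
    (hH : ∀ y, |H y - d * y ^ 2 / 2| ≤ C * y ^ 4 / 24) (hC : 0 ≤ C) (ht : 0 < t)
    (hS : ∀ y ≠ 0, |H y| / (a ^ 2 + y ^ 2) ≤ S) {x : ℝ} (hx : x ≠ 0) :
    (|H x| / x ^ 2 - C * t / 12) * (t / (a ^ 2 + t)) ≤ S := by
  have hx2 : 0 < x ^ 2 := by positivity
  have habs : ∀ y, |d * y ^ 2 / 2| = |d| * y ^ 2 / 2 := fun y => by
    rw [abs_div, abs_mul, abs_two, abs_of_nonneg (sq_nonneg y)]
  rcases le_or_gt t (x ^ 2) with hlarge | hsmall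
  · calc (|H x| / x ^ 2 - C * t / 12) * (t / (a ^ 2 + t))
          ≤ |H x| / x ^ 2 * (x ^ 2 / (a ^ 2 + x ^ 2)) := by
            refine mul_le_mul (by linarith [mul_nonneg hC ht.le]) ?_ (by positivity) (by positivity)
            rw [div_le_div_iff₀ (by positivity) (by positivity)]
            nlinarith [sq_nonneg a]
        _ = |H x| / (a ^ 2 + x ^ 2) := by field_simp
        _ ≤ S := hS x hx
  -- For small `x` the quadratic Taylor term carries `|H x|`, and it is then large at `√t` too.
  have hd : |H x| / x ^ 2 - C * t / 24 ≤ |d| / 2 := by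
    have := (abs_sub_abs_le_abs_sub _ _).trans (hH x)
    rw [habs, sub_le_iff_le_add] at this
    rw [sub_le_iff_le_add, div_le_iff₀ hx2]
    nlinarith [mul_le_mul_of_nonneg_left hsmall.le (mul_nonneg hC hx2.le)]
  set y := √t
  have hy : y ^ 2 = t := Real.sq_sqrt ht.le
  have hHy : t * (|H x| / x ^ 2 - C * t / 12) ≤ |H y| := by
    have := (abs_sub_abs_le_abs_sub _ _).trans ((abs_sub_comm _ _).trans_le (hH y))
    rw [habs, show y ^ 4 = t ^ 2 by rw [← hy]; ring, hy] at this
    nlinarith [mul_le_mul_of_nonneg_left hd ht.le]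
  calc (|H x| / x ^ 2 - C * t / 12) * (t / (a ^ 2 + t))
      = t * (|H x| / x ^ 2 - C * t / 12) / (a ^ 2 + y ^ 2) := by rw [hy]; ring
    _ ≤ |H y| / (a ^ 2 + y ^ 2) := by gcongr
    _ ≤ S := hS y (Real.sqrt_ne_zero'.mpr ht)

lemma DN_one_zero_sub_mul_le {H : ℝ → ℝ} {d C a t : ℝ}
    (hH : ∀ y, |H y - d * y ^ 2 / 2| ≤ C * y ^ 4 / 24) (hC : 0 ≤ C) (ht : 0 < t)
    (hbdd : BddAbove (Set.range fun x : {x : ℝ // x ≠ 0} => |H x| / (a ^ 2 + x.1 ^ 2))) :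
    (DN 1 H 0 - C * t / 12) * (t / (a ^ 2 + t)) ≤ DN 1 H a := by
  have hk : 0 < t / (a ^ 2 + t) := by positivity
  have hS : ∀ y ≠ 0, |H y| / (a ^ 2 + y ^ 2) ≤ DN 1 H a := fun y hy => by
    rw [DN_one_eq]
    exact le_ciSup hbdd ⟨y, hy⟩
  have : Nonempty {x : ℝ // x ≠ 0} := ⟨⟨1, one_ne_zero⟩⟩
  rw [← le_div_iff₀ hk, sub_le_iff_le_add, DN_one_eq]
  refine ciSup_le fun x => ?_
  rw [zero_pow two_ne_zero, zero_add, ← sub_le_iff_le_add, le_div_iff₀ hk]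
  exact mul_le_of_abs_sub_quadratic_le hH hC ht hS x.2

theorem D1_lower_bound_general (H : ℝ → ℝ) (hC : ContDiff ℝ 4 H)
    (hbdd : ∀ p : Fin 5, BddAbove (Set.range fun η => |iteratedDeriv (p : ℕ) H η|))
    (hH0 : H 0 = 0) (heven : ∀ η, H η = H (-η))
    (a : ℝ) :
    DN 1 H 0 ^ 2 / (3 / 2 * derivBound4 H * a ^ 2 + 4 * DN 1 H 0) ≤ DN 1 H a := by
  set C := derivBound4 H
  set D := DN 1 H 0
  have hderiv (p : Fin 5) (y : ℝ) : |iteratedDeriv p H y| ≤ C :=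
    (le_ciSup (hbdd p) y).trans <|
      le_ciSup (f := fun q : Fin 5 => ⨆ η, |iteratedDeriv q H η|) (Set.finite_range _).bddAbove p
  have hodd (n : ℕ) (hn : Odd n) : iteratedDeriv n H 0 = 0 :=
    Function.Even.iteratedDeriv_eq_zero_of_odd (fun x => (heven x).symm) hn
  have hquad (x : ℝ) : |H x| ≤ C / 2 * x ^ 2 := by
    have := abs_sub_taylor_le (hC.of_le (by norm_num)) (n := 1) (hderiv 2) 0 x
    simpa [Finset.sum_range_succ, hH0, hodd 1 odd_one, sq_abs, div_mul_eq_mul_div] using this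
  have hquart (x : ℝ) : |H x - iteratedDeriv 2 H 0 * x ^ 2 / 2| ≤ C * x ^ 4 / 24 := by
    have := abs_sub_taylor_le hC (n := 3) (hderiv 4) 0 x
    simpa [Finset.sum_range_succ, hH0, hodd 1 odd_one, hodd 3 (by decide), Nat.factorial,
      div_mul_eq_mul_div, (by decide : Even 4).pow_abs] using this
  rcases eq_or_lt_of_le (show 0 ≤ D from DN_one_nonneg) with hD | hD
  · simpa [← hD] using DN_one_nonneg
  have hCD : 2 * D ≤ C := by linarith [DN_one_le_of_abs_le_sq hquad (b := 0)]
  have hCpos : 0 < C := by linarith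
  calc D ^ 2 / (3 / 2 * C * a ^ 2 + 4 * D)
      ≤ 3 * D ^ 2 / (C * a ^ 2 + 6 * D) := by
        rw [div_le_div_iff₀ (by positivity) (by positivity)]
        nlinarith [mul_nonneg (mul_nonneg hCpos.le (sq_nonneg a)) (sq_nonneg D)]
    _ = (D - C * (6 * D / C) / 12) * (6 * D / C / (a ^ 2 + 6 * D / C)) := by
        field_simp
        ring
    _ ≤ DN 1 H a :=
        DN_one_zero_sub_mul_le hquart hCpos.le (by positivity) (bddAbove_of_abs_le_sq hquad)

/-- **Lemma 6 (`firststep`)**: `D₁(H,a) ≥ D₁(H,0)² / ((3/2)C₄ a² + 4 D₁(H,0))`. -/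
theorem D1_lower_bound (H : ℝ → ℝ) (hC : ContDiff ℝ 4 H)
    (hbdd : ∀ p : Fin 5, BddAbove (Set.range fun η => |iteratedDeriv (p : ℕ) H η|))
    (hH0 : H 0 = 0) (heven : ∀ η, H η = H (-η))
    (a : ℝ) (ha : 0 ≤ a) :
    DN 1 H 0 ^ 2 / (3 / 2 * derivBound4 H * a ^ 2 + 4 * DN 1 H 0) ≤ DN 1 H a :=
  D1_lower_bound_general H hC hbdd hH0 heven a
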